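/- arXiv:2507.12582 — 3 statements merged into one kernel-verified Lean document; each statement's English description precedes it below -/
import Mathlib

section
/- With r > 0, b > r fixed, the outage-area function S₄(c) = (π − β(c))·r² + 2·sqrt(s(s−b)(s−c)(s−r)) − α(c)·c² is strictly decreasing in c on the interval (b − r, b + r). -/
/-- The outage-area function `S₄(c)` from the paper: the area of the part of the
disk of radius `r` centered at the origin lying outside the disk of radius `c`
centered at distance `b`. -/
noncomputable def S4 (b r c : ℝ) : ℝ :=
  (Real.pi - Real.arccos ((b ^ 2 + r ^ 2 - c ^ 2) / (2 * b * r))) * r ^ 2 +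
    2 * Real.sqrt (((b + c + r) / 2) * ((b + c + r) / 2 - b) *
      ((b + c + r) / 2 - c) * ((b + c + r) / 2 - r)) -
    Real.arccos ((b ^ 2 + c ^ 2 - r ^ 2) / (2 * b * c)) * c ^ 2

lemma S4_hasDerivAt (b r c : ℝ) (hr : 0 < r) (hbr : r < b)
    (hc1 : b - r < c) (hc2 : c < b + r) :
    HasDerivAt (S4 b r)
      (-2 * c * Real.arccos ((b ^ 2 + c ^ 2 - r ^ 2) / (2 * b * c))) c := by
  have hb : 0 < b := hr.trans hbr
  have hc : 0 < c := lt_of_le_of_lt (by linarith) hc1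
  have hQ : 0 < ((b + r) ^ 2 - c ^ 2) * (c ^ 2 - (b - r) ^ 2) := by
    apply mul_pos <;> nlinarith
  set S := Real.sqrt (((b + r) ^ 2 - c ^ 2) * (c ^ 2 - (b - r) ^ 2)) with hSdef
  have hSpos : 0 < S := Real.sqrt_pos.mpr hQ
  set u : ℝ := (b ^ 2 + r ^ 2 - c ^ 2) / (2 * b * r) with hu
  set v : ℝ := (b ^ 2 + c ^ 2 - r ^ 2) / (2 * b * c) with hv
  have hu1 : 1 - u ^ 2
      = (((b + r) ^ 2 - c ^ 2) * (c ^ 2 - (b - r) ^ 2)) / (2 * b * r) ^ 2 := by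
    rw [hu]; field_simp; ring
  have hv1 : 1 - v ^ 2
      = (((b + r) ^ 2 - c ^ 2) * (c ^ 2 - (b - r) ^ 2)) / (2 * b * c) ^ 2 := by
    rw [hv]; field_simp; ring
  have hu2 : u ^ 2 < 1 := by
    nlinarith [hu1, div_pos hQ (by positivity : (0:ℝ) < (2*b*r)^2)]
  have hv2 : v ^ 2 < 1 := by
    nlinarith [hv1, div_pos hQ (by positivity : (0:ℝ) < (2*b*c)^2)]
  have hune1 : u ≠ 1 := by intro h; rw [h] at hu2; norm_num at hu2
  have hunem1 : u ≠ -1 := by intro h; rw [h] at hu2; norm_num at hu2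
  have hvne1 : v ≠ 1 := by intro h; rw [h] at hv2; norm_num at hv2
  have hvnem1 : v ≠ -1 := by intro h; rw [h] at hv2; norm_num at hv2
  have hsu : Real.sqrt (1 - u ^ 2) = S / (2 * b * r) := by
    rw [hu1, Real.sqrt_div hQ.le, Real.sqrt_sq (by positivity : (0:ℝ) ≤ 2 * b * r)]
  have hsv : Real.sqrt (1 - v ^ 2) = S / (2 * b * c) := by
    rw [hv1, Real.sqrt_div hQ.le, Real.sqrt_sq (by positivity : (0:ℝ) ≤ 2 * b * c)]
  -- derivative of u
  have hdu : HasDerivAt (fun x : ℝ => (b ^ 2 + r ^ 2 - x ^ 2) / (2 * b * r))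
      (-c / (b * r)) c := by
    have := ((hasDerivAt_pow 2 c).const_sub (b ^ 2 + r ^ 2)).div_const (2 * b * r)
    refine this.congr_deriv ?_
    rw [div_eq_div_iff (by positivity) (by positivity)]
    simp only [Nat.cast_ofNat, show (2:ℕ) - 1 = 1 from rfl, pow_one]; ring
  -- derivative of v
  have hdv : HasDerivAt (fun x : ℝ => (b ^ 2 + x ^ 2 - r ^ 2) / (2 * b * x))
      ((c ^ 2 + r ^ 2 - b ^ 2) / (2 * b * c ^ 2)) c := by
    have h1 : HasDerivAt (fun x : ℝ => b ^ 2 + x ^ 2 - r ^ 2) (2 * c) c := by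
      simpa using ((hasDerivAt_pow 2 c).const_add (b ^ 2)).sub_const (r ^ 2)
    have h2 : HasDerivAt (fun x : ℝ => 2 * b * x) (2 * b) c := by
      simpa using (hasDerivAt_id c).const_mul (2 * b)
    have := h1.div h2 (by positivity)
    refine this.congr_deriv ?_
    rw [div_eq_div_iff (by positivity) (by positivity)]; ring
  -- arccos compositions
  have hAu : HasDerivAt (fun x : ℝ => Real.arccos ((b ^ 2 + r ^ 2 - x ^ 2) / (2 * b * r)))
      (-(1 / Real.sqrt (1 - u ^ 2)) * (-c / (b * r))) c :=
    by have := (Real.hasDerivAt_arccos hunem1 hune1).comp c hdu; exact this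
  have hAv : HasDerivAt (fun x : ℝ => Real.arccos ((b ^ 2 + x ^ 2 - r ^ 2) / (2 * b * x)))
      (-(1 / Real.sqrt (1 - v ^ 2)) * ((c ^ 2 + r ^ 2 - b ^ 2) / (2 * b * c ^ 2))) c :=
    by have := (Real.hasDerivAt_arccos hvnem1 hvne1).comp c hdv; exact this
  -- the Heron polynomial
  set q : ℝ → ℝ := fun x => (2 * (b ^ 2 + r ^ 2) * x ^ 2 - x ^ 4 - (b ^ 2 - r ^ 2) ^ 2) / 16
    with hqdef
  have hqc : q c = (((b + r) ^ 2 - c ^ 2) * (c ^ 2 - (b - r) ^ 2)) / 16 := by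
    rw [hqdef]; ring
  have hqpos : 0 < q c := by rw [hqc]; positivity
  have hdq : HasDerivAt q ((4 * (b ^ 2 + r ^ 2) * c - 4 * c ^ 3) / 16) c := by
    have := ((((hasDerivAt_pow 2 c).const_mul (2 * (b ^ 2 + r ^ 2))).sub
      (hasDerivAt_pow 4 c)).sub_const ((b ^ 2 - r ^ 2) ^ 2)).div_const 16
    refine this.congr_deriv ?_
    push_cast; ring
  have hsq : HasDerivAt (fun x => Real.sqrt (q x))
      (((4 * (b ^ 2 + r ^ 2) * c - 4 * c ^ 3) / 16) / (2 * Real.sqrt (q c))) c :=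
    hdq.sqrt hqpos.ne'
  have hsqc : Real.sqrt (q c) = S / 4 := by
    rw [hqc, Real.sqrt_div hQ.le, show (16:ℝ) = 4 ^ 2 by norm_num,
      Real.sqrt_sq (by norm_num : (0:ℝ) ≤ 4)]
  -- assemble
  have hA : HasDerivAt
      (fun x : ℝ => (Real.pi - Real.arccos ((b ^ 2 + r ^ 2 - x ^ 2) / (2 * b * r))) * r ^ 2)
      (-(-(1 / Real.sqrt (1 - u ^ 2)) * (-c / (b * r))) * r ^ 2) c :=
    (hAu.const_sub Real.pi).mul_const _
  have hC : HasDerivAt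
      (fun x : ℝ => Real.arccos ((b ^ 2 + x ^ 2 - r ^ 2) / (2 * b * x)) * x ^ 2)
      ((-(1 / Real.sqrt (1 - v ^ 2)) * ((c ^ 2 + r ^ 2 - b ^ 2) / (2 * b * c ^ 2))) * c ^ 2
        + Real.arccos v * (↑2 * c ^ 1)) c :=
    hAv.mul (hasDerivAt_pow 2 c)
  have hF : HasDerivAt
      (fun x : ℝ => (Real.pi - Real.arccos ((b ^ 2 + r ^ 2 - x ^ 2) / (2 * b * r))) * r ^ 2
        + 2 * Real.sqrt (q x)
        - Real.arccos ((b ^ 2 + x ^ 2 - r ^ 2) / (2 * b * x)) * x ^ 2)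
      ((-(-(1 / Real.sqrt (1 - u ^ 2)) * (-c / (b * r))) * r ^ 2
        + 2 * (((4 * (b ^ 2 + r ^ 2) * c - 4 * c ^ 3) / 16) / (2 * Real.sqrt (q c))))
        - ((-(1 / Real.sqrt (1 - v ^ 2)) * ((c ^ 2 + r ^ 2 - b ^ 2) / (2 * b * c ^ 2))) * c ^ 2
          + Real.arccos v * (↑2 * c ^ 1))) c :=
    (hA.add (hsq.const_mul 2)).sub hC
  have hfun : S4 b r =
      fun x : ℝ => (Real.pi - Real.arccos ((b ^ 2 + r ^ 2 - x ^ 2) / (2 * b * r))) * r ^ 2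
        + 2 * Real.sqrt (q x)
        - Real.arccos ((b ^ 2 + x ^ 2 - r ^ 2) / (2 * b * x)) * x ^ 2 := by
    funext x
    unfold S4
    rw [show ((b + x + r) / 2) * ((b + x + r) / 2 - b) * ((b + x + r) / 2 - x) *
      ((b + x + r) / 2 - r) = q x from by rw [hqdef]; ring]
  have hD : (-(-(1 / Real.sqrt (1 - u ^ 2)) * (-c / (b * r))) * r ^ 2
        + 2 * (((4 * (b ^ 2 + r ^ 2) * c - 4 * c ^ 3) / 16) / (2 * Real.sqrt (q c))))
        - ((-(1 / Real.sqrt (1 - v ^ 2)) * ((c ^ 2 + r ^ 2 - b ^ 2) / (2 * b * c ^ 2))) * c ^ 2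
          + Real.arccos v * (↑2 * c ^ 1))
      = -2 * c * Real.arccos v := by
    rw [hsu, hsv, hsqc]
    field_simp
    ring
  rw [hfun]
  exact hD ▸ hF

/-- For fixed `r > 0` and `b > r`, the outage-area function `S₄` is strictly
decreasing on `(b − r, b + r)`. -/
theorem S4_strictAntiOn (b r : ℝ) (hr : 0 < r) (hbr : r < b) :
    StrictAntiOn (S4 b r) (Set.Ioo (b - r) (b + r)) := by
  have hb : 0 < b := hr.trans hbr
  apply strictAntiOn_of_deriv_neg (convex_Ioo _ _)
  · intro x hx
    exact (S4_hasDerivAt b r x hr hbr hx.1 hx.2).differentiableAt.continuousAt.continuousWithinAt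
  · intro x hx
    rw [interior_Ioo] at hx
    have hx0 : 0 < x := lt_of_le_of_lt (by linarith [hx.1]) hx.1
    rw [(S4_hasDerivAt b r x hr hbr hx.1 hx.2).deriv]
    have hv1 : (b ^ 2 + x ^ 2 - r ^ 2) / (2 * b * x) < 1 := by
      rw [div_lt_one (by positivity)]
      nlinarith [hx.1, hx.2]
    have hα := Real.arccos_pos.mpr hv1
    nlinarith [mul_pos hx0 hα]
end

section
/- For r > 0, b > r, and any ε ∈ (0, 1), there exists a unique c* ∈ (b − r, b + r) such that S₄(c*) = ε·π·r², where S₄ is the outage-area function defined via α, β, s as above. -/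
open Real Set

/-- Polynomial form of the Heron expression. -/
noncomputable def Q4 (b r c : ℝ) : ℝ :=
  (2 * b ^ 2 * c ^ 2 + 2 * b ^ 2 * r ^ 2 + 2 * c ^ 2 * r ^ 2 - b ^ 4 - c ^ 4 - r ^ 4) / 16

lemma heron_eq_Q4 (b r c : ℝ) :
    ((b + c + r) / 2) * ((b + c + r) / 2 - b) * ((b + c + r) / 2 - c) * ((b + c + r) / 2 - r)
      = Q4 b r c := by
  unfold Q4; ring

lemma Q4_pos {b r c : ℝ} (hr : 0 < r) (hbr : r < b) (hc1 : b - r < c) (hc2 : c < b + r) :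
    0 < Q4 b r c := by
  rw [← heron_eq_Q4]
  have h1 : (0:ℝ) < (b + c + r) / 2 := by linarith
  have h2 : (0:ℝ) < (b + c + r) / 2 - b := by linarith
  have h3 : (0:ℝ) < (b + c + r) / 2 - c := by linarith
  have h4 : (0:ℝ) < (b + c + r) / 2 - r := by linarith
  exact mul_pos (mul_pos (mul_pos h1 h2) h3) h4

lemma u_sq_lt_one {b r c : ℝ} (hr : 0 < r) (hbr : r < b) (hc1 : b - r < c) (hc2 : c < b + r) :
    ((b ^ 2 + r ^ 2 - c ^ 2) / (2 * b * r)) ^ 2 < 1 := by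
  have hb : 0 < b := hr.trans hbr
  have hQ := Q4_pos hr hbr hc1 hc2
  have h : 1 - ((b ^ 2 + r ^ 2 - c ^ 2) / (2 * b * r)) ^ 2 = 4 * Q4 b r c / (b ^ 2 * r ^ 2) := by
    unfold Q4; field_simp; ring
  have hpos : 0 < 4 * Q4 b r c / (b ^ 2 * r ^ 2) := by positivity
  linarith

lemma v_sq_lt_one {b r c : ℝ} (hr : 0 < r) (hbr : r < b) (hc1 : b - r < c) (hc2 : c < b + r) :
    ((b ^ 2 + c ^ 2 - r ^ 2) / (2 * b * c)) ^ 2 < 1 := by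
  have hb : 0 < b := hr.trans hbr
  have hc0 : 0 < c := by linarith
  have hQ := Q4_pos hr hbr hc1 hc2
  have h : 1 - ((b ^ 2 + c ^ 2 - r ^ 2) / (2 * b * c)) ^ 2 = 4 * Q4 b r c / (b ^ 2 * c ^ 2) := by
    unfold Q4; field_simp; ring
  have hpos : 0 < 4 * Q4 b r c / (b ^ 2 * c ^ 2) := by positivity
  linarith

lemma sqrt_one_sub_u_sq {b r c : ℝ} (hr : 0 < r) (hbr : r < b) (hc1 : b - r < c)
    (hc2 : c < b + r) :
    Real.sqrt (1 - ((b ^ 2 + r ^ 2 - c ^ 2) / (2 * b * r)) ^ 2)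
      = 2 * Real.sqrt (Q4 b r c) / (b * r) := by
  have hb : 0 < b := hr.trans hbr
  have hQ := Q4_pos hr hbr hc1 hc2
  have h2 : (2 * Real.sqrt (Q4 b r c) / (b * r)) ^ 2 = 4 * Q4 b r c / (b ^ 2 * r ^ 2) := by
    rw [div_pow, mul_pow, Real.sq_sqrt hQ.le]; ring
  have key : 1 - ((b ^ 2 + r ^ 2 - c ^ 2) / (2 * b * r)) ^ 2
      = (2 * Real.sqrt (Q4 b r c) / (b * r)) ^ 2 := by
    rw [h2]; unfold Q4; field_simp; ring
  rw [key, Real.sqrt_sq (by positivity)]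

lemma sqrt_one_sub_v_sq {b r c : ℝ} (hr : 0 < r) (hbr : r < b) (hc1 : b - r < c)
    (hc2 : c < b + r) :
    Real.sqrt (1 - ((b ^ 2 + c ^ 2 - r ^ 2) / (2 * b * c)) ^ 2)
      = 2 * Real.sqrt (Q4 b r c) / (b * c) := by
  have hb : 0 < b := hr.trans hbr
  have hc0 : 0 < c := by linarith
  have hQ := Q4_pos hr hbr hc1 hc2
  have h2 : (2 * Real.sqrt (Q4 b r c) / (b * c)) ^ 2 = 4 * Q4 b r c / (b ^ 2 * c ^ 2) := by
    rw [div_pow, mul_pow, Real.sq_sqrt hQ.le]; ring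
  have key : 1 - ((b ^ 2 + c ^ 2 - r ^ 2) / (2 * b * c)) ^ 2
      = (2 * Real.sqrt (Q4 b r c) / (b * c)) ^ 2 := by
    rw [h2]; unfold Q4; field_simp; ring
  rw [key, Real.sqrt_sq (by positivity)]

lemma hasDerivAt_S4 {b r : ℝ} (c : ℝ) (hr : 0 < r) (hbr : r < b) (hc1 : b - r < c)
    (hc2 : c < b + r) :
    HasDerivAt (S4 b r)
      (-(2 * c * Real.arccos ((b ^ 2 + c ^ 2 - r ^ 2) / (2 * b * c)))) c := by
  have hb : 0 < b := hr.trans hbr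
  have hc0 : 0 < c := by linarith
  have hQ := Q4_pos hr hbr hc1 hc2
  have hS : 0 < Real.sqrt (Q4 b r c) := Real.sqrt_pos.2 hQ
  -- u bounds
  have hu := abs_lt.1 ((sq_lt_one_iff_abs_lt_one _).1 (u_sq_lt_one hr hbr hc1 hc2))
  have hv := abs_lt.1 ((sq_lt_one_iff_abs_lt_one _).1 (v_sq_lt_one hr hbr hc1 hc2))
  -- derivative of the β-term inner function
  have d_in1 : HasDerivAt (fun x : ℝ => (b ^ 2 + r ^ 2 - x ^ 2) / (2 * b * r))
      (-(2 * c) / (2 * b * r)) c := by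
    have h := ((hasDerivAt_pow 2 c).const_sub (b ^ 2 + r ^ 2)).div_const (2 * b * r)
    exact h.congr_deriv (by simp)
  have d_ar1 : HasDerivAt (fun x : ℝ => Real.arccos ((b ^ 2 + r ^ 2 - x ^ 2) / (2 * b * r)))
      (-(1 / Real.sqrt (1 - ((b ^ 2 + r ^ 2 - c ^ 2) / (2 * b * r)) ^ 2))
        * (-(2 * c) / (2 * b * r))) c :=
    by have := (Real.hasDerivAt_arccos hu.1.ne' hu.2.ne).comp c d_in1; exact this
  have term1 : HasDerivAt
      (fun x : ℝ => (Real.pi - Real.arccos ((b ^ 2 + r ^ 2 - x ^ 2) / (2 * b * r))) * r ^ 2)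
      (-(-(1 / Real.sqrt (1 - ((b ^ 2 + r ^ 2 - c ^ 2) / (2 * b * r)) ^ 2))
        * (-(2 * c) / (2 * b * r))) * r ^ 2) c :=
    (d_ar1.const_sub Real.pi).mul_const (r ^ 2)
  -- derivative of the α-term inner function
  have d_num : HasDerivAt (fun x : ℝ => b ^ 2 + x ^ 2 - r ^ 2) (2 * c) c := by
    have h := ((hasDerivAt_pow 2 c).const_add (b ^ 2)).sub_const (r ^ 2)
    exact h.congr_deriv (by simp)
  have d_den : HasDerivAt (fun x : ℝ => 2 * b * x) (2 * b) c := by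
    have h := (hasDerivAt_id c).const_mul (2 * b)
    exact h.congr_deriv (by simp)
  have d_in2 : HasDerivAt (fun x : ℝ => (b ^ 2 + x ^ 2 - r ^ 2) / (2 * b * x))
      ((2 * c * (2 * b * c) - (b ^ 2 + c ^ 2 - r ^ 2) * (2 * b)) / (2 * b * c) ^ 2) c :=
    d_num.div d_den (by positivity)
  have d_ar2 : HasDerivAt (fun x : ℝ => Real.arccos ((b ^ 2 + x ^ 2 - r ^ 2) / (2 * b * x)))
      (-(1 / Real.sqrt (1 - ((b ^ 2 + c ^ 2 - r ^ 2) / (2 * b * c)) ^ 2))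
        * ((2 * c * (2 * b * c) - (b ^ 2 + c ^ 2 - r ^ 2) * (2 * b)) / (2 * b * c) ^ 2)) c :=
    by have := (Real.hasDerivAt_arccos hv.1.ne' hv.2.ne).comp c d_in2; exact this
  have term3 : HasDerivAt
      (fun x : ℝ => Real.arccos ((b ^ 2 + x ^ 2 - r ^ 2) / (2 * b * x)) * x ^ 2)
      (-(1 / Real.sqrt (1 - ((b ^ 2 + c ^ 2 - r ^ 2) / (2 * b * c)) ^ 2))
        * ((2 * c * (2 * b * c) - (b ^ 2 + c ^ 2 - r ^ 2) * (2 * b)) / (2 * b * c) ^ 2) * c ^ 2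
        + Real.arccos ((b ^ 2 + c ^ 2 - r ^ 2) / (2 * b * c)) * (2 * c)) c := by
    have h := d_ar2.mul (hasDerivAt_pow 2 c)
    refine h.congr_deriv ?_
    simp
  -- derivative of Q4
  have d_Q : HasDerivAt (fun x : ℝ => Q4 b r x) (c * (b ^ 2 + r ^ 2 - c ^ 2) / 4) c := by
    have h2 : HasDerivAt (fun x : ℝ => x ^ 2) (2 * c) c := by
      simpa using hasDerivAt_pow 2 c
    have h4 : HasDerivAt (fun x : ℝ => x ^ 4) (4 * c ^ 3) c := by
      simpa using hasDerivAt_pow 4 c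
    have h := (((((h2.const_mul (2 * b ^ 2)).add_const (2 * b ^ 2 * r ^ 2)).add
      ((h2.const_mul 2).mul_const (r ^ 2))).sub_const (b ^ 4)).sub h4).sub_const (r ^ 4)
    have h' := h.div_const 16
    have hfq : (fun x : ℝ => Q4 b r x) = fun x : ℝ =>
        (2 * b ^ 2 * x ^ 2 + 2 * b ^ 2 * r ^ 2 + 2 * x ^ 2 * r ^ 2
          - b ^ 4 - x ^ 4 - r ^ 4) / 16 := rfl
    rw [hfq]
    refine h'.congr_deriv ?_
    ring
  have d_sq : HasDerivAt (fun x : ℝ => Real.sqrt (Q4 b r x))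
      (1 / (2 * Real.sqrt (Q4 b r c)) * (c * (b ^ 2 + r ^ 2 - c ^ 2) / 4)) c :=
    (Real.hasDerivAt_sqrt hQ.ne').comp c d_Q
  have term2 : HasDerivAt (fun x : ℝ => 2 * Real.sqrt (Q4 b r x))
      (2 * (1 / (2 * Real.sqrt (Q4 b r c)) * (c * (b ^ 2 + r ^ 2 - c ^ 2) / 4))) c :=
    d_sq.const_mul 2
  have htot := (term1.add term2).sub term3
  have hfun : S4 b r = (fun x : ℝ =>
      (Real.pi - Real.arccos ((b ^ 2 + r ^ 2 - x ^ 2) / (2 * b * r))) * r ^ 2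
        + 2 * Real.sqrt (Q4 b r x)
        - Real.arccos ((b ^ 2 + x ^ 2 - r ^ 2) / (2 * b * x)) * x ^ 2) := by
    funext x
    simp only [S4, heron_eq_Q4]
  rw [hfun]
  refine htot.congr_deriv ?_
  rw [sqrt_one_sub_u_sq hr hbr hc1 hc2, sqrt_one_sub_v_sq hr hbr hc1 hc2]
  field_simp
  ring

lemma S4_continuousOn {b r : ℝ} (hr : 0 < r) (hbr : r < b) :
    ContinuousOn (S4 b r) (Icc (b - r) (b + r)) := by
  have hb : 0 < b := hr.trans hbr
  have hfun : S4 b r = (fun c : ℝ =>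
      (Real.pi - Real.arccos ((b ^ 2 + r ^ 2 - c ^ 2) / (2 * b * r))) * r ^ 2 +
        2 * Real.sqrt (((b + c + r) / 2) * ((b + c + r) / 2 - b) *
          ((b + c + r) / 2 - c) * ((b + c + r) / 2 - r)) -
        Real.arccos ((b ^ 2 + c ^ 2 - r ^ 2) / (2 * b * c)) * c ^ 2) := rfl
  rw [hfun]
  apply ContinuousOn.sub
  · apply ContinuousOn.add
    · apply Continuous.continuousOn
      exact (continuous_const.sub (Real.continuous_arccos.comp (by fun_prop))).mul continuous_const
    · apply Continuous.continuousOn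
      exact continuous_const.mul (Real.continuous_sqrt.comp (by fun_prop))
  · apply ContinuousOn.mul
    · apply Real.continuous_arccos.comp_continuousOn
      apply ContinuousOn.div (by fun_prop) (by fun_prop)
      intro x hx
      have hx0 : 0 < x := lt_of_lt_of_le (by linarith) hx.1
      positivity
    · exact (continuous_pow 2).continuousOn

lemma S4_left {b r : ℝ} (hr : 0 < r) (hbr : r < b) :
    S4 b r (b - r) = Real.pi * r ^ 2 := by
  have hb : 0 < b := hr.trans hbr
  have hbrne : b - r ≠ 0 := sub_ne_zero.2 hbr.ne'
  have e1 : (b ^ 2 + r ^ 2 - (b - r) ^ 2) / (2 * b * r) = 1 := by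
    field_simp; ring
  have e2 : (b ^ 2 + (b - r) ^ 2 - r ^ 2) / (2 * b * (b - r)) = 1 := by
    field_simp; ring
  have e3 : ((b + (b - r) + r) / 2) * ((b + (b - r) + r) / 2 - b) *
      ((b + (b - r) + r) / 2 - (b - r)) * ((b + (b - r) + r) / 2 - r) = 0 := by ring
  simp only [S4, e1, e2, e3, Real.arccos_one, Real.sqrt_zero]
  ring

lemma S4_right {b r : ℝ} (hr : 0 < r) (hbr : r < b) :
    S4 b r (b + r) = 0 := by
  have hb : 0 < b := hr.trans hbr
  have hbrne : b + r ≠ 0 := by positivity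
  have e1 : (b ^ 2 + r ^ 2 - (b + r) ^ 2) / (2 * b * r) = -1 := by
    field_simp; ring
  have e2 : (b ^ 2 + (b + r) ^ 2 - r ^ 2) / (2 * b * (b + r)) = 1 := by
    field_simp; ring
  have e3 : ((b + (b + r) + r) / 2) * ((b + (b + r) + r) / 2 - b) *
      ((b + (b + r) + r) / 2 - (b + r)) * ((b + (b + r) + r) / 2 - r) = 0 := by ring
  simp only [S4, e1, e2, e3, Real.arccos_one, Real.arccos_neg_one, Real.sqrt_zero]
  ring

/-- For any outage threshold `ε ∈ (0, 1)` there is a unique `c* ∈ (b−r, b+r)`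
with `S₄(c*) = ε·π·r²`. -/
theorem S4_exists_unique_root (b r ε : ℝ) (hr : 0 < r) (hbr : r < b)
    (hε : ε ∈ Set.Ioo (0 : ℝ) 1) :
    ∃! c : ℝ, c ∈ Set.Ioo (b - r) (b + r) ∧ S4 b r c = ε * Real.pi * r ^ 2 := by
  obtain ⟨hε0, hε1⟩ := hε
  have hb : 0 < b := hr.trans hbr
  have hab : b - r ≤ b + r := by linarith
  have hcont := S4_continuousOn hr hbr
  have hanti : StrictAntiOn (S4 b r) (Icc (b - r) (b + r)) := by
    apply strictAntiOn_of_deriv_neg (convex_Icc _ _) hcont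
    intro x hx
    rw [interior_Icc] at hx
    rw [(hasDerivAt_S4 x hr hbr hx.1 hx.2).deriv]
    have hx0 : 0 < x := lt_of_le_of_lt (by linarith) hx.1
    have hv := abs_lt.1 ((sq_lt_one_iff_abs_lt_one _).1 (v_sq_lt_one hr hbr hx.1 hx.2))
    have hα : 0 < Real.arccos ((b ^ 2 + x ^ 2 - r ^ 2) / (2 * b * x)) :=
      Real.arccos_pos.2 hv.2
    have := mul_pos (by linarith : (0:ℝ) < 2 * x) hα
    linarith
  have hmem : ε * Real.pi * r ^ 2 ∈ Ioo (S4 b r (b + r)) (S4 b r (b - r)) := by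
    rw [S4_right hr hbr, S4_left hr hbr]
    constructor
    · have := Real.pi_pos
      positivity
    · have hpr : 0 < Real.pi * r ^ 2 := mul_pos Real.pi_pos (pow_pos hr 2)
      nlinarith [hpr]
  obtain ⟨c, hcmem, hceq⟩ := intermediate_value_Ioo' hab hcont hmem
  refine ⟨c, ⟨hcmem, hceq⟩, ?_⟩
  rintro c' ⟨hc'mem, hc'eq⟩
  exact hanti.injOn (Ioo_subset_Icc_self hc'mem) (Ioo_subset_Icc_self hcmem)
    (by rw [hc'eq, hceq])
end

section
/- Let X be a random point uniformly distributed on the closed disk of radius r centered at p₀ in the plane, and let q be a point with dist(q, p₀) = b where b > r. For c ∈ (b − r, b + r), the probability that dist(X, q) > c equals S₄(c)/(π r²), where S₄(c) = (π − β)r² + 2·sqrt(s(s−b)(s−c)(s−r)) − α c², α = arccos((b²+c²−r²)/(2bc)), β = arccos((b²+r²−c²)/(2br)), s = (b+c+r)/2. -/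
open MeasureTheory

lemma seg_deriv (r : ℝ) (hr : 0 < r) {x : ℝ} (hx : x ∈ Set.Ioo (-r) r) :
    HasDerivAt (fun x : ℝ => x * Real.sqrt (r ^ 2 - x ^ 2) + r ^ 2 * Real.arcsin (x / r))
      (2 * Real.sqrt (r ^ 2 - x ^ 2)) x := by
  obtain ⟨hx1, hx2⟩ := hx
  have hpos : 0 < r ^ 2 - x ^ 2 := by nlinarith
  have hs : 0 < Real.sqrt (r ^ 2 - x ^ 2) := Real.sqrt_pos.2 hpos
  have hS : Real.sqrt (r ^ 2 - x ^ 2) ^ 2 = r ^ 2 - x ^ 2 := Real.sq_sqrt hpos.le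
  have h1 : HasDerivAt (fun x : ℝ => r ^ 2 - x ^ 2) (-(2 * x)) x := by
    simpa using ((hasDerivAt_pow 2 x).const_sub (r ^ 2))
  have h2 : HasDerivAt (fun x : ℝ => Real.sqrt (r ^ 2 - x ^ 2))
      (-x / Real.sqrt (r ^ 2 - x ^ 2)) x := by
    have := (Real.hasDerivAt_sqrt hpos.ne').comp x h1
    refine this.congr_deriv (Eq.symm ?_)
    field_simp
  have h3 : HasDerivAt (fun x : ℝ => x * Real.sqrt (r ^ 2 - x ^ 2))
      (1 * Real.sqrt (r ^ 2 - x ^ 2) + x * (-x / Real.sqrt (r ^ 2 - x ^ 2))) x :=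
    (hasDerivAt_id x).mul h2
  have hd1 : x / r ≠ -1 := by
    intro h
    rw [div_eq_iff hr.ne'] at h
    linarith
  have hd2 : x / r ≠ 1 := by
    intro h
    rw [div_eq_iff hr.ne'] at h
    linarith
  have h4 : HasDerivAt (fun x : ℝ => Real.arcsin (x / r))
      (1 / Real.sqrt (1 - (x / r) ^ 2) * (1 / r)) x :=
    (Real.hasDerivAt_arcsin hd1 hd2).comp (h₂ := Real.arcsin) x ((hasDerivAt_id' x).div_const r)
  have h5 := h3.add ((h4.const_mul (r ^ 2)))
  refine h5.congr_deriv (Eq.symm ?_)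
  have hsq : Real.sqrt (1 - (x / r) ^ 2) = Real.sqrt (r ^ 2 - x ^ 2) / r := by
    rw [show (1 : ℝ) - (x / r) ^ 2 = (r ^ 2 - x ^ 2) / r ^ 2 by field_simp,
      Real.sqrt_div hpos.le, Real.sqrt_sq hr.le]
  rw [hsq]
  field_simp
  linear_combination hS

lemma seg_integral (r d : ℝ) (hr : 0 < r) (hd1 : -r ≤ d) (hd2 : d ≤ r) :
    ∫ x in d..r, 2 * Real.sqrt (r ^ 2 - x ^ 2) =
      r ^ 2 * Real.arccos (d / r) - d * Real.sqrt (r ^ 2 - d ^ 2) := by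
  have hcont : ContinuousOn (fun x : ℝ => x * Real.sqrt (r ^ 2 - x ^ 2) +
      r ^ 2 * Real.arcsin (x / r)) (Set.Icc d r) := by
    exact ((continuous_id.mul (Real.continuous_sqrt.comp (by fun_prop))).add
      (continuous_const.mul (Real.continuous_arcsin.comp (by fun_prop)))).continuousOn
  have hint : IntervalIntegrable (fun x : ℝ => 2 * Real.sqrt (r ^ 2 - x ^ 2)) volume d r := by
    apply Continuous.intervalIntegrable
    fun_prop
  have h := intervalIntegral.integral_eq_sub_of_hasDeriv_right_of_le hd2 hcont
    (fun x hx => (seg_deriv r hr ⟨lt_of_le_of_lt hd1 hx.1, hx.2⟩).hasDerivWithinAt) hint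
  rw [h]
  have : Real.sqrt (r ^ 2 - r ^ 2) = 0 := by simp
  rw [this, div_self hr.ne', Real.arcsin_one, Real.arccos]
  ring

lemma seg_volume (r d : ℝ) (hr : 0 < r) (hd1 : -r ≤ d) (hd2 : d ≤ r) :
    volume {p : ℝ × ℝ | p.1 ^ 2 + p.2 ^ 2 ≤ r ^ 2 ∧ d ≤ p.1} =
      ENNReal.ofReal (r ^ 2 * Real.arccos (d / r) - d * Real.sqrt (r ^ 2 - d ^ 2)) := by
  set S : Set (ℝ × ℝ) := {p | p.1 ^ 2 + p.2 ^ 2 ≤ r ^ 2 ∧ d ≤ p.1} with hS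
  have hmeas : MeasurableSet S := by
    have : S = {p : ℝ × ℝ | p.1 ^ 2 + p.2 ^ 2 ≤ r ^ 2} ∩ {p : ℝ × ℝ | d ≤ p.1} := rfl
    rw [this]
    exact (measurableSet_le (by fun_prop) measurable_const).inter
      (measurableSet_le measurable_const (by fun_prop))
  have hfib : ∀ x : ℝ, volume (Prod.mk x ⁻¹' S) =
      Set.indicator (Set.Icc d r) (fun x => ENNReal.ofReal (2 * Real.sqrt (r ^ 2 - x ^ 2))) x := by
    intro x
    by_cases hx : x ∈ Set.Icc d r
    · have h1 : Prod.mk x ⁻¹' S =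
          Set.Icc (-Real.sqrt (r ^ 2 - x ^ 2)) (Real.sqrt (r ^ 2 - x ^ 2)) := by
        ext y
        simp only [S, Set.mem_preimage, Set.mem_setOf_eq, Set.mem_Icc]
        constructor
        · rintro ⟨h2, -⟩
          have : y ^ 2 ≤ r ^ 2 - x ^ 2 := by linarith
          have := Real.abs_le_sqrt this
          exact abs_le.1 this
        · rintro ⟨h2, h3⟩
          have hnn : 0 ≤ r ^ 2 - x ^ 2 := by nlinarith [hx.1, hx.2]
          have hsq : Real.sqrt (r ^ 2 - x ^ 2) ^ 2 = r ^ 2 - x ^ 2 := Real.sq_sqrt hnn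
          refine ⟨by nlinarith, hx.1⟩
      rw [h1, Set.indicator_of_mem hx, Real.volume_Icc]
      congr 1
      ring
    · have h1 : Prod.mk x ⁻¹' S = ∅ := by
        ext y
        simp only [S, Set.mem_preimage, Set.mem_setOf_eq, Set.mem_empty_iff_false, iff_false]
        rintro ⟨h2, h3⟩
        rw [Set.mem_Icc, not_and_or, not_le, not_le] at hx
        rcases hx with hx | hx
        · linarith
        · nlinarith [sq_nonneg y]
      rw [h1, Set.indicator_of_notMem hx]
      simp
  rw [Measure.volume_eq_prod, Measure.prod_apply hmeas]
  rw [lintegral_congr hfib, lintegral_indicator measurableSet_Icc]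
  have hcont : Continuous fun x : ℝ => 2 * Real.sqrt (r ^ 2 - x ^ 2) := by fun_prop
  rw [← MeasureTheory.ofReal_integral_eq_lintegral_ofReal
    (hcont.integrableOn_Icc) (Filter.Eventually.of_forall fun x => by positivity)]
  rw [MeasureTheory.integral_Icc_eq_integral_Ioc,
    ← intervalIntegral.integral_of_le hd2, seg_integral r d hr hd1 hd2]

lemma seg_nonneg (r d : ℝ) (hr : 0 < r) (hd1 : -r ≤ d) (hd2 : d ≤ r) :
    0 ≤ r ^ 2 * Real.arccos (d / r) - d * Real.sqrt (r ^ 2 - d ^ 2) := by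
  have ht1 : -1 ≤ d / r := by rw [le_div_iff₀ hr]; linarith
  have ht2 : d / r ≤ 1 := by rw [div_le_one hr]; linarith
  set θ := Real.arccos (d / r) with hθ
  have hcos : Real.cos θ = d / r := Real.cos_arccos ht1 ht2
  have hsin : Real.sin θ = Real.sqrt (1 - (d / r) ^ 2) := Real.sin_arccos _
  have hθ0 : 0 ≤ θ := Real.arccos_nonneg _
  have hsqrt : Real.sqrt (r ^ 2 - d ^ 2) = r * Real.sqrt (1 - (d / r) ^ 2) := by
    rw [show r ^ 2 - d ^ 2 = r ^ 2 * (1 - (d / r) ^ 2) by field_simp,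
      Real.sqrt_mul (sq_nonneg r), Real.sqrt_sq hr.le]
  have key : Real.sin (2 * θ) ≤ 2 * θ := by
    have := Real.sin_le (by linarith : 0 ≤ 2 * θ)
    linarith
  rw [Real.sin_two_mul, hcos, hsin] at key
  rw [hsqrt]
  have : d * (r * Real.sqrt (1 - (d / r) ^ 2)) = r ^ 2 * ((d / r) * Real.sqrt (1 - (d/r) ^ 2)) := by
    field_simp
  rw [this]
  nlinarith [sq_nonneg r]

lemma measurableSet_le2 (f g : ℝ × ℝ → ℝ) (hf : Measurable f) (hg : Measurable g) :
    MeasurableSet {p : ℝ × ℝ | f p ≤ g p} := measurableSet_le hf hg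

lemma disk_volume (r : ℝ) (hr : 0 < r) :
    volume {p : ℝ × ℝ | p.1 ^ 2 + p.2 ^ 2 ≤ r ^ 2} = ENNReal.ofReal (Real.pi * r ^ 2) := by
  have h : {p : ℝ × ℝ | p.1 ^ 2 + p.2 ^ 2 ≤ r ^ 2} =
      {p : ℝ × ℝ | p.1 ^ 2 + p.2 ^ 2 ≤ r ^ 2 ∧ -r ≤ p.1} := by
    ext p
    simp only [Set.mem_setOf_eq]
    refine ⟨fun h => ⟨h, ?_⟩, fun h => h.1⟩
    nlinarith [sq_nonneg p.2, sq_nonneg (p.1 + r)]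
  rw [h, seg_volume r (-r) hr le_rfl (by linarith)]
  congr 1
  rw [neg_div, div_self hr.ne', Real.arccos_neg_one]
  simp
  ring
lemma outage_volume (b r c : ℝ) (hr : 0 < r) (hbr : r < b) (hc1 : b - r < c) (hc2 : c < b + r) :
    volume {p : ℝ × ℝ | p.1 ^ 2 + p.2 ^ 2 ≤ r ^ 2 ∧ c ^ 2 < (p.1 - b) ^ 2 + p.2 ^ 2} =
      ENNReal.ofReal (S4 b r c) := by
  have hb0 : 0 < b := lt_trans hr hbr
  have hc0 : 0 < c := by linarith
  set d : ℝ := (b ^ 2 + r ^ 2 - c ^ 2) / (2 * b) with hd_def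
  have hd_eq : 2 * b * d = b ^ 2 + r ^ 2 - c ^ 2 := by
    rw [hd_def]; field_simp
  have hd1 : -r ≤ d := by nlinarith
  have hd2 : d ≤ r := by nlinarith
  have hbd1 : -c ≤ b - d := by nlinarith
  have hbd2 : b - d ≤ c := by nlinarith
  -- the two segments
  set A : Set (ℝ × ℝ) := {p | (p.1 - b) ^ 2 + p.2 ^ 2 ≤ c ^ 2 ∧ p.1 ≤ d} with hA
  set B : Set (ℝ × ℝ) := {p | p.1 ^ 2 + p.2 ^ 2 ≤ r ^ 2 ∧ d ≤ p.1} with hB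
  set L : Set (ℝ × ℝ) := {p | p.1 ^ 2 + p.2 ^ 2 ≤ r ^ 2 ∧ (p.1 - b) ^ 2 + p.2 ^ 2 ≤ c ^ 2}
    with hL
  set D : Set (ℝ × ℝ) := {p | p.1 ^ 2 + p.2 ^ 2 ≤ r ^ 2} with hD
  have hmeasA : MeasurableSet A :=
    (measurableSet_le2 (fun p => (p.1 - b) ^ 2 + p.2 ^ 2) (fun _ => c ^ 2) (by fun_prop)
      (by fun_prop)).inter
      (measurableSet_le2 (fun p => p.1) (fun _ => d) (by fun_prop) (by fun_prop))
  have hmeasB : MeasurableSet B :=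
    (measurableSet_le2 (fun p => p.1 ^ 2 + p.2 ^ 2) (fun _ => r ^ 2) (by fun_prop)
      (by fun_prop)).inter
      (measurableSet_le2 (fun _ => d) (fun p => p.1) (by fun_prop) (by fun_prop))
  have hmeasL : MeasurableSet L :=
    (measurableSet_le2 (fun p => p.1 ^ 2 + p.2 ^ 2) (fun _ => r ^ 2) (by fun_prop)
      (by fun_prop)).inter
      (measurableSet_le2 (fun p => (p.1 - b) ^ 2 + p.2 ^ 2) (fun _ => c ^ 2) (by fun_prop)
      (by fun_prop))
  have hLAB : L = A ∪ B := by
    ext p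
    simp only [hL, hA, hB, Set.mem_setOf_eq, Set.mem_union]
    constructor
    · rintro ⟨h1, h2⟩
      rcases le_total p.1 d with h | h
      · exact Or.inl ⟨h2, h⟩
      · exact Or.inr ⟨h1, h⟩
    · rintro (⟨h1, h2⟩ | ⟨h1, h2⟩)
      · have := mul_le_mul_of_nonneg_left h2 hb0.le
        constructor
        · nlinarith
        · nlinarith
      · have := mul_le_mul_of_nonneg_left h2 hb0.le
        constructor
        · exact h1
        · nlinarith
  have hABinter : volume (A ∩ B) = 0 := by
    have hsub : A ∩ B ⊆ ({d} : Set ℝ) ×ˢ (Set.univ : Set ℝ) := by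
      rintro p ⟨⟨-, h1⟩, ⟨-, h2⟩⟩
      exact ⟨le_antisymm h1 h2, trivial⟩
    refine measure_mono_null hsub ?_
    rw [Measure.volume_eq_prod, Measure.prod_prod]
    simp
  have hvolB : volume B = ENNReal.ofReal
      (r ^ 2 * Real.arccos (d / r) - d * Real.sqrt (r ^ 2 - d ^ 2)) :=
    seg_volume r d hr hd1 hd2
  -- A via reflection
  have hφ : MeasurePreserving (fun p : ℝ × ℝ => (b - p.1, p.2)) volume volume := by
    rw [Measure.volume_eq_prod]
    exact (Measure.measurePreserving_sub_left volume b).prod (MeasurePreserving.id volume)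
  have hvolA : volume A = ENNReal.ofReal
      (c ^ 2 * Real.arccos ((b - d) / c) - (b - d) * Real.sqrt (c ^ 2 - (b - d) ^ 2)) := by
    have hpre : A = (fun p : ℝ × ℝ => (b - p.1, p.2)) ⁻¹'
        {p : ℝ × ℝ | p.1 ^ 2 + p.2 ^ 2 ≤ c ^ 2 ∧ (b - d) ≤ p.1} := by
      ext p
      simp only [hA, Set.mem_preimage, Set.mem_setOf_eq]
      constructor
      · rintro ⟨h1, h2⟩; exact ⟨by nlinarith, by linarith⟩
      · rintro ⟨h1, h2⟩; exact ⟨by nlinarith, by linarith⟩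
    rw [hpre, hφ.measure_preimage]
    · exact seg_volume c (b - d) hc0 hbd1 hbd2
    · exact ((measurableSet_le2 (fun p => p.1 ^ 2 + p.2 ^ 2) (fun _ => c ^ 2) (by fun_prop)
        (by fun_prop)).inter
        (measurableSet_le2 (fun _ => b - d) (fun p => p.1) (by fun_prop)
        (by fun_prop))).nullMeasurableSet
  have hvolL : volume L = ENNReal.ofReal
      ((r ^ 2 * Real.arccos (d / r) - d * Real.sqrt (r ^ 2 - d ^ 2)) +
       (c ^ 2 * Real.arccos ((b - d) / c) - (b - d) * Real.sqrt (c ^ 2 - (b - d) ^ 2))) := by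
    have := measure_union_add_inter (μ := volume) A hmeasB
    rw [hABinter, add_zero] at this
    rw [hLAB, this, hvolA, hvolB, ← ENNReal.ofReal_add
      (seg_nonneg c (b - d) hc0 hbd1 hbd2) (seg_nonneg r d hr hd1 hd2)]
    congr 1
    ring
  have hOL : {p : ℝ × ℝ | p.1 ^ 2 + p.2 ^ 2 ≤ r ^ 2 ∧ c ^ 2 < (p.1 - b) ^ 2 + p.2 ^ 2} =
      D \ L := by
    ext p
    simp only [hD, hL, Set.mem_setOf_eq, Set.mem_diff]
    constructor
    · rintro ⟨h1, h2⟩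
      exact ⟨h1, fun h => absurd h.2 (not_le.2 h2)⟩
    · rintro ⟨h1, h2⟩
      refine ⟨h1, ?_⟩
      by_contra h
      exact h2 ⟨h1, not_lt.1 h⟩
  have hLsub : L ⊆ D := fun p hp => hp.1
  rw [hOL, measure_diff hLsub hmeasL.nullMeasurableSet (by rw [hvolL]; exact ENNReal.ofReal_ne_top)]
  rw [disk_volume r hr, hvolL, ← ENNReal.ofReal_sub _ (by
    have h1 := seg_nonneg r d hr hd1 hd2
    have h2 := seg_nonneg c (b - d) hc0 hbd1 hbd2
    linarith)]
  congr 1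
  have harg1 : d / r = (b ^ 2 + r ^ 2 - c ^ 2) / (2 * b * r) := by
    rw [hd_def]; field_simp
  have harg2 : (b - d) / c = (b ^ 2 + c ^ 2 - r ^ 2) / (2 * b * c) := by
    rw [hd_def]; field_simp; ring
  have hsq : c ^ 2 - (b - d) ^ 2 = r ^ 2 - d ^ 2 := by linear_combination hd_eq
  have hheron : 2 * Real.sqrt (((b + c + r) / 2) * ((b + c + r) / 2 - b) *
      ((b + c + r) / 2 - c) * ((b + c + r) / 2 - r)) = b * Real.sqrt (r ^ 2 - d ^ 2) := by
    have e1 : b * Real.sqrt (r ^ 2 - d ^ 2) = Real.sqrt (b ^ 2 * (r ^ 2 - d ^ 2)) := by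
      rw [Real.sqrt_mul (sq_nonneg b), Real.sqrt_sq hb0.le]
    have e2 : ∀ H : ℝ, 2 * Real.sqrt H = Real.sqrt (2 ^ 2 * H) := by
      intro H
      rw [Real.sqrt_mul (sq_nonneg 2), Real.sqrt_sq (by norm_num : (0:ℝ) ≤ 2)]
    rw [e2, e1]
    congr 1
    linear_combination ((2 * b * d + (b ^ 2 + r ^ 2 - c ^ 2)) / 4) * hd_eq
  simp only [S4]
  rw [← harg1, ← harg2, hheron, hsq]
  ring

/-- For `X` uniformly distributed on the closed disk of radius `r` centered at `p₀`
and a point `q` at distance `b > r` from `p₀`, for `c ∈ (b−r, b+r)` the probability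
that `dist X q > c` equals `S₄(c)/(π r²)`. -/
theorem outage_probability_eq (p0 q : EuclideanSpace ℝ (Fin 2)) (b r c : ℝ)
    (hr : 0 < r) (hbr : r < b) (hb : dist q p0 = b)
    (hc : c ∈ Set.Ioo (b - r) (b + r)) :
    ((volume (Metric.closedBall p0 r))⁻¹ • volume.restrict (Metric.closedBall p0 r))
        {x : EuclideanSpace ℝ (Fin 2) | c < dist x q} =
      ENNReal.ofReal (S4 b r c / (Real.pi * r ^ 2)) := by
  obtain ⟨hc1, hc2⟩ := hc
  have hb0 : 0 < b := lt_trans hr hbr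
  have hc0 : 0 < c := by linarith
  -- construct orthonormal basis with first vector in direction q - p0
  set u : EuclideanSpace ℝ (Fin 2) := b⁻¹ • (q - p0) with hu_def
  have hqp : ‖q - p0‖ = b := by rw [← dist_eq_norm]; exact hb
  have hu_norm : ‖u‖ = 1 := by
    rw [hu_def, norm_smul, hqp, norm_inv, Real.norm_of_nonneg hb0.le,
      inv_mul_cancel₀ hb0.ne']
  have hcard : Module.finrank ℝ (EuclideanSpace ℝ (Fin 2)) = Fintype.card (Fin 2) := by
    simp [finrank_euclideanSpace]
  have hON : Orthonormal ℝ (Set.restrict ({0} : Set (Fin 2)) (fun _ => u)) := by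
    rw [orthonormal_iff_ite]
    intro i j
    have hij : i = j := Subtype.ext (by
      rw [Set.mem_singleton_iff.mp i.2, Set.mem_singleton_iff.mp j.2])
    subst hij
    have h1 : (inner ℝ u u : ℝ) = 1 := by
      rw [real_inner_self_eq_norm_sq, hu_norm]; norm_num
    simpa [Set.restrict] using h1
  obtain ⟨B, hB⟩ := hON.exists_orthonormalBasis_extension_of_card_eq hcard
  have hB0 : B 0 = u := hB 0 rfl
  -- the measure preserving map to ℝ × ℝ
  set T : EuclideanSpace ℝ (Fin 2) → ℝ × ℝ :=
    fun x => (MeasurableEquiv.finTwoArrow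
      (((MeasurableEquiv.toLp 2 (Fin 2 → ℝ)).symm) (B.repr (x - p0)))) with hT_def
  have hT : MeasurePreserving T volume volume :=
    ((MeasureTheory.volume_preserving_finTwoArrow ℝ).comp
      ((EuclideanSpace.volume_preserving_symm_measurableEquiv_toLp (Fin 2)).comp
        (B.measurePreserving_repr.comp
          (measurePreserving_sub_right volume p0))))
  have hT_apply : ∀ x, T x = (B.repr (x - p0) 0, B.repr (x - p0) 1) := by
    intro x
    simp [hT_def, MeasurableEquiv.finTwoArrow, MeasurableEquiv.coe_toLp_symm]
  -- coordinates of q - p0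
  have hq_coord : B.repr (q - p0) = b • EuclideanSpace.single (0 : Fin 2) (1 : ℝ) := by
    have : q - p0 = b • u := by rw [hu_def, smul_inv_smul₀ hb0.ne']
    rw [this, B.repr.map_smul, ← hB0, B.repr_self]
  have hnormsq : ∀ z : EuclideanSpace ℝ (Fin 2), ‖z‖ ^ 2 = z 0 ^ 2 + z 1 ^ 2 := by
    intro z
    rw [EuclideanSpace.norm_eq, Real.sq_sqrt (by positivity)]
    simp [Fin.sum_univ_two, sq_abs]
  -- preimage identifications
  have hball : Metric.closedBall p0 r = T ⁻¹' {p : ℝ × ℝ | p.1 ^ 2 + p.2 ^ 2 ≤ r ^ 2} := by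
    ext x
    rw [Metric.mem_closedBall, Set.mem_preimage, hT_apply]
    simp only [Set.mem_setOf_eq]
    have h1 : dist x p0 = ‖B.repr (x - p0)‖ := by
      rw [dist_eq_norm, ← B.repr.norm_map (x - p0)]
    have h2 := hnormsq (B.repr (x - p0))
    have hn := norm_nonneg (B.repr (x - p0))
    rw [h1]
    set n1 : ℝ := ‖B.repr (x - p0)‖
    set a0 : ℝ := B.repr (x - p0) 0
    set a1 : ℝ := B.repr (x - p0) 1
    clear_value n1 a0 a1
    clear hnormsq hT_apply hT hT_def hq_coord hB hB0 hON hu_def hqp hu_norm hcard T u h1 x hb p0 q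
    constructor
    · intro h
      nlinarith
    · intro h
      nlinarith
  have houtage : {x : EuclideanSpace ℝ (Fin 2) | c < dist x q} ∩ Metric.closedBall p0 r =
      T ⁻¹' {p : ℝ × ℝ | p.1 ^ 2 + p.2 ^ 2 ≤ r ^ 2 ∧ c ^ 2 < (p.1 - b) ^ 2 + p.2 ^ 2} := by
    ext x
    rw [Set.mem_inter_iff, Set.mem_preimage, hT_apply]
    simp only [Set.mem_setOf_eq, Metric.mem_closedBall]
    have h1 : dist x p0 = ‖B.repr (x - p0)‖ := by
      rw [dist_eq_norm, ← B.repr.norm_map (x - p0)]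
    have h2 := hnormsq (B.repr (x - p0))
    have h3 : dist x q = ‖B.repr (x - q)‖ := by
      rw [dist_eq_norm, ← B.repr.norm_map (x - q)]
    have h4 : B.repr (x - q) = B.repr (x - p0) - b • EuclideanSpace.single (0 : Fin 2) (1 : ℝ) := by
      rw [← hq_coord, ← map_sub]
      congr 1
      abel
    have h5 : B.repr (x - q) 0 = B.repr (x - p0) 0 - b := by
      rw [h4]; simp [EuclideanSpace.single_apply]
    have h6 : B.repr (x - q) 1 = B.repr (x - p0) 1 := by
      rw [h4]; simp [EuclideanSpace.single_apply]
    have h7 := hnormsq (B.repr (x - q))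
    rw [h5, h6] at h7
    have hn1 := norm_nonneg (B.repr (x - p0))
    have hn2 := norm_nonneg (B.repr (x - q))
    rw [h1, h3]
    set n1 : ℝ := ‖B.repr (x - p0)‖
    set n2 : ℝ := ‖B.repr (x - q)‖
    set a0 : ℝ := B.repr (x - p0) 0
    set a1 : ℝ := B.repr (x - p0) 1
    clear_value n1 n2 a0 a1
    clear h4 h5 h6 hq_coord hnormsq hT_apply hT hT_def hball hB hB0 hON hu_def hqp hu_norm
      hcard T u h1 h3 x hb p0 q
    constructor
    · rintro ⟨hd, hball⟩
      exact ⟨by nlinarith, by nlinarith⟩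
    · rintro ⟨hball, hd⟩
      exact ⟨by nlinarith, by nlinarith⟩
  -- put it together
  have hopen : MeasurableSet {x : EuclideanSpace ℝ (Fin 2) | c < dist x q} :=
    (isOpen_lt continuous_const (continuous_id.dist continuous_const)).measurableSet
  rw [Measure.smul_apply, Measure.restrict_apply hopen]
  rw [houtage, hball]
  rw [hT.measure_preimage ?_, hT.measure_preimage ?_]
  · rw [disk_volume r hr, outage_volume b r c hr hbr hc1 hc2]
    rw [← ENNReal.ofReal_inv_of_pos (by positivity), smul_eq_mul,
      ← ENNReal.ofReal_mul (by positivity), inv_mul_eq_div]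
  · exact ((measurableSet_le (f := fun p : ℝ × ℝ => p.1 ^ 2 + p.2 ^ 2)
      (g := fun _ => r ^ 2) (by fun_prop) (by fun_prop)).inter
      (measurableSet_lt (f := fun _ : ℝ × ℝ => c ^ 2)
      (g := fun p => (p.1 - b) ^ 2 + p.2 ^ 2) (by fun_prop) (by fun_prop))).nullMeasurableSet
  · exact ((measurableSet_le (f := fun p : ℝ × ℝ => p.1 ^ 2 + p.2 ^ 2)
      (g := fun _ => r ^ 2) (by fun_prop) (by fun_prop))).nullMeasurableSet
end
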